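/- arXiv:2001.05635 — 7 statements merged into one kernel-verified Lean document; each statement's English description precedes it below -/
import Mathlib

section
/- Let f ∈ 𝔽_q[t] be a highly composite polynomial, and let p, p' ∈ 𝔽_q[t] be monic irreducible polynomials with deg p < deg p'. Then the multiplicity of p' in the factorization of f is at most the multiplicity of p in the factorization of f. -/
/-!
Write `f = p ^ a * p' ^ b * m` with `p, p' ∤ m` and suppose `a < b`. Interchanging the two
exponents maps the monic divisors of `f` injectively (it is an involution) into those of
`f' = p ^ b * p' ^ a * m`, so `τ f ≤ τ f'`, while `deg f' = deg f - (b - a) (deg p' - deg p)`.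
The monic polynomial `g = X ^ ((b - a) (deg p' - deg p)) * f'` has the degree of `f`, and its
proper divisor `f'` has fewer monic divisors than `g` does, so `τ f < τ g`: `f` is not highly
composite.
-/

open Polynomial

/-- The number of monic divisors of a polynomial. -/
noncomputable def tau {Fq : Type} [Field Fq] (f : Fq[X]) : ℕ :=
  {d : Fq[X] | d.Monic ∧ d ∣ f}.ncard

/-- The multiplicity of `p` in the factorization of `f`. -/
noncomputable def mult {Fq : Type} [Field Fq] (p f : Fq[X]) : ℕ :=
  multiplicity p f

/-- A monic polynomial is highly composite if it maximizes `tau` among monic polynomials of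
degree at most its own. -/
def HighlyComposite {Fq : Type} [Field Fq] (f : Fq[X]) : Prop :=
  f.Monic ∧ ∀ g : Fq[X], g.Monic → g.natDegree ≤ f.natDegree → tau g ≤ tau f

open UniqueFactorizationMonoid in
theorem Polynomial.finite_setOf_monic_dvd {K : Type*} [Field K] {f : K[X]} (hf : f ≠ 0) :
    {d : K[X] | d.Monic ∧ d ∣ f}.Finite := by
  classical
  refine ((normalizedFactors f).powerset.toFinset.finite_toSet.image Multiset.prod).subset ?_
  rintro d ⟨hd, hdf⟩
  refine ⟨normalizedFactors d, ?_, ?_⟩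
  · simpa using (dvd_iff_normalizedFactors_le_normalizedFactors hd.ne_zero hf).mp hdf
  · simpa [hd.leadingCoeff] using leadingCoeff_mul_prod_normalizedFactors d

theorem multiplicity_pow_mul_of_not_dvd {α : Type*} [CommMonoidWithZero α] [IsCancelMulZero α]
    {p x : α} (hp : p ≠ 0) (hx : ¬p ∣ x) (n : ℕ) : multiplicity p (p ^ n * x) = n := by
  refine multiplicity_eq_of_dvd_of_not_dvd (dvd_mul_right _ _) fun h => hx ?_
  rw [pow_succ] at h
  exact (mul_dvd_mul_iff_left (pow_ne_zero n hp)).mp h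

theorem multiplicity_pow_mul_pow_mul {α : Type*} [CommMonoidWithZero α] [IsCancelMulZero α]
    {p q e : α} (hp : Prime p) (hpq : ¬p ∣ q) (hpe : ¬p ∣ e) (i j : ℕ) :
    multiplicity p (p ^ i * q ^ j * e) = i := by
  rw [mul_assoc]
  refine multiplicity_pow_mul_of_not_dvd hp.ne_zero (fun h => ?_) i
  rcases hp.dvd_or_dvd h with h | h
  exacts [hpq (hp.dvd_of_dvd_pow h), hpe h]

namespace EuclideanDomain

variable {R : Type*} [EuclideanDomain R]

noncomputable def coprimePart (p q x : R) : R :=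
  x / (p ^ multiplicity p x * q ^ multiplicity q x)

noncomputable def swapPow (p q x : R) : R :=
  p ^ multiplicity q x * q ^ multiplicity p x * coprimePart p q x

variable {p q x : R}

theorem coprimePart_comm : coprimePart q p x = coprimePart p q x := by
  rw [coprimePart, coprimePart, mul_comm]

theorem pow_mul_pow_mul_coprimePart (hp : Prime p) (hq : Prime q) (hpq : ¬Associated p q) :
    p ^ multiplicity p x * q ^ multiplicity q x * coprimePart p q x = x := by
  refine EuclideanDomain.mul_div_cancel' (mul_ne_zero (pow_ne_zero _ hp.ne_zero)
    (pow_ne_zero _ hq.ne_zero)) (IsCoprime.mul_dvd ?_ (pow_multiplicity_dvd p x)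
    (pow_multiplicity_dvd q x))
  exact ((hp.coprime_iff_not_dvd).mpr (mt (hp.associated_of_dvd hq) hpq)).pow

theorem not_dvd_coprimePart (hp : Prime p) (hq : Prime q) (hpq : ¬Associated p q)
    (hx : x ≠ 0) : ¬p ∣ coprimePart p q x := by
  rintro ⟨c, hc⟩
  refine (FiniteMultiplicity.of_not_isUnit hp.not_isUnit hx).not_pow_dvd_of_multiplicity_lt
    (lt_add_one _) ⟨q ^ multiplicity q x * c, ?_⟩
  conv_lhs => rw [← pow_mul_pow_mul_coprimePart (x := x) hp hq hpq, hc]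
  ring

theorem not_dvd_coprimePart_right (hp : Prime p) (hq : Prime q) (hpq : ¬Associated p q)
    (hx : x ≠ 0) : ¬q ∣ coprimePart p q x :=
  coprimePart_comm (p := p) ▸ not_dvd_coprimePart hq hp (mt .symm hpq) hx

theorem coprimePart_pow_mul_pow_mul {e : R} (hp : Prime p) (hq : Prime q) (hpq : ¬Associated p q)
    (hpe : ¬p ∣ e) (hqe : ¬q ∣ e) (i j : ℕ) :
    coprimePart p q (p ^ i * q ^ j * e) = e := by
  rw [coprimePart, multiplicity_pow_mul_pow_mul hp (mt (hp.associated_of_dvd hq) hpq) hpe,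
    mul_comm (p ^ i), multiplicity_pow_mul_pow_mul hq (mt (hq.associated_of_dvd hp) (mt .symm hpq))
    hqe, mul_comm (q ^ j)]
  exact mul_div_cancel_left₀ e (mul_ne_zero (pow_ne_zero _ hp.ne_zero) (pow_ne_zero _ hq.ne_zero))

theorem multiplicity_swapPow_left (hp : Prime p) (hq : Prime q) (hpq : ¬Associated p q)
    (hx : x ≠ 0) :
    multiplicity p (swapPow p q x) = multiplicity q x :=
  multiplicity_pow_mul_pow_mul hp (mt (hp.associated_of_dvd hq) hpq)
    (not_dvd_coprimePart hp hq hpq hx) _ _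

theorem multiplicity_swapPow_right (hp : Prime p) (hq : Prime q) (hpq : ¬Associated p q)
    (hx : x ≠ 0) :
    multiplicity q (swapPow p q x) = multiplicity p x := by
  rw [swapPow, mul_comm (p ^ _)]
  exact multiplicity_pow_mul_pow_mul hq (mt (hq.associated_of_dvd hp) (mt .symm hpq))
    (not_dvd_coprimePart_right hp hq hpq hx) _ _

theorem coprimePart_swapPow (hp : Prime p) (hq : Prime q) (hpq : ¬Associated p q)
    (hx : x ≠ 0) : coprimePart p q (swapPow p q x) = coprimePart p q x :=
  coprimePart_pow_mul_pow_mul hp hq hpq (not_dvd_coprimePart hp hq hpq hx)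
    (not_dvd_coprimePart_right hp hq hpq hx) _ _

theorem swapPow_ne_zero (hp : Prime p) (hq : Prime q) (hpq : ¬Associated p q) (hx : x ≠ 0) :
    swapPow p q x ≠ 0 :=
  mul_ne_zero (mul_ne_zero (pow_ne_zero _ hp.ne_zero) (pow_ne_zero _ hq.ne_zero))
    (right_ne_zero_of_mul ((pow_mul_pow_mul_coprimePart (x := x) hp hq hpq).symm ▸ hx))

theorem swapPow_swapPow (hp : Prime p) (hq : Prime q) (hpq : ¬Associated p q)
    (hx : x ≠ 0) : swapPow p q (swapPow p q x) = x := by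
  rw [swapPow, multiplicity_swapPow_left hp hq hpq hx, multiplicity_swapPow_right hp hq hpq hx,
    coprimePart_swapPow hp hq hpq hx, pow_mul_pow_mul_coprimePart hp hq hpq]

theorem coprimePart_dvd_coprimePart {d : R} (hp : Prime p) (hq : Prime q) (hpq : ¬Associated p q)
    (hx : x ≠ 0) (hdx : d ∣ x) :
    coprimePart p q d ∣ coprimePart p q x := by
  have hd : d ≠ 0 := ne_zero_of_dvd_ne_zero hx hdx
  have hcoprime : IsCoprime (coprimePart p q d) (p ^ multiplicity p x * q ^ multiplicity q x) :=
    (((hp.coprime_iff_not_dvd).mpr (not_dvd_coprimePart hp hq hpq hd)).symm.pow_right).mul_right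
      (((hq.coprime_iff_not_dvd).mpr
        (not_dvd_coprimePart_right hp hq hpq hd)).symm.pow_right)
  refine hcoprime.dvd_of_dvd_mul_left ?_
  rw [pow_mul_pow_mul_coprimePart hp hq hpq]
  exact (Dvd.intro_left _ (pow_mul_pow_mul_coprimePart hp hq hpq)).trans hdx

theorem swapPow_dvd_swapPow {d : R} (hp : Prime p) (hq : Prime q) (hpq : ¬Associated p q)
    (hx : x ≠ 0) (hdx : d ∣ x) :
    swapPow p q d ∣ swapPow p q x := by
  have le_of_dvd {r : R} (hr : Prime r) : multiplicity r d ≤ multiplicity r x :=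
    (FiniteMultiplicity.of_not_isUnit hr.not_isUnit hx).le_multiplicity_of_pow_dvd
      ((pow_multiplicity_dvd r d).trans hdx)
  exact mul_dvd_mul (mul_dvd_mul (pow_dvd_pow p (le_of_dvd hq)) (pow_dvd_pow q (le_of_dvd hp)))
    (coprimePart_dvd_coprimePart hp hq hpq hx hdx)

end EuclideanDomain

namespace Polynomial

theorem Monic.natDegree_pow_mul_pow_mul {R : Type*} [Semiring R] {p q e : R[X]}
    (hp : p.Monic) (hq : q.Monic) (he : e.Monic) (i j : ℕ) :
    (p ^ i * q ^ j * e).natDegree = i * p.natDegree + j * q.natDegree + e.natDegree := by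
  rw [((hp.pow i).mul (hq.pow j)).natDegree_mul he, (hp.pow i).natDegree_mul (hq.pow j),
    hp.natDegree_pow, hq.natDegree_pow]

open EuclideanDomain

variable {K : Type*} [Field K] {p q x : K[X]}

theorem Monic.coprimePart (hx : x.Monic) (hpm : p.Monic) (hqm : q.Monic) (hp : Prime p)
    (hq : Prime q) (hpq : ¬Associated p q) : (coprimePart p q x).Monic :=
  ((hpm.pow _).mul (hqm.pow _)).of_mul_monic_left
    (by rwa [pow_mul_pow_mul_coprimePart hp hq hpq])

theorem Monic.swapPow (hx : x.Monic) (hpm : p.Monic) (hqm : q.Monic) (hp : Prime p)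
    (hq : Prime q) (hpq : ¬Associated p q) : (swapPow p q x).Monic := by
  rw [EuclideanDomain.swapPow]
  exact ((hpm.pow _).mul (hqm.pow _)).mul (hx.coprimePart hpm hqm hp hq hpq)

end Polynomial

theorem tau_lt_tau_of_dvd_of_ne {K : Type} [Field K] {f g : K[X]} (hf : f.Monic) (hg : g.Monic)
    (hfg : f ∣ g) (hne : f ≠ g) : tau f < tau g := by
  refine Set.ncard_lt_ncard ⟨fun d hd => ⟨hd.1, hd.2.trans hfg⟩, fun hsub => hne ?_⟩
    (Polynomial.finite_setOf_monic_dvd hg.ne_zero)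
  exact eq_of_monic_of_associated hf hg (associated_of_dvd_dvd hfg (hsub ⟨hg, dvd_rfl⟩).2)

open EuclideanDomain in
theorem tau_le_tau_swapPow {K : Type} [Field K] {p q f : K[X]} (hpm : p.Monic) (hqm : q.Monic)
    (hp : Prime p) (hq : Prime q) (hpq : ¬Associated p q) (hf : f ≠ 0) :
    tau f ≤ tau (swapPow p q f) := by
  refine Set.ncard_le_ncard_of_injOn (swapPow p q)
    (fun d hd => ⟨hd.1.swapPow hpm hqm hp hq hpq, swapPow_dvd_swapPow hp hq hpq hf hd.2⟩)
    (fun d₁ hd₁ d₂ hd₂ h => ?_) (Polynomial.finite_setOf_monic_dvd (swapPow_ne_zero hp hq hpq hf))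
  rw [← swapPow_swapPow hp hq hpq hd₁.1.ne_zero, h, swapPow_swapPow hp hq hpq hd₂.1.ne_zero]

theorem multiplicity_antitone_of_highlyComposite_general {Fq : Type} [Field Fq]
    (f : Fq[X]) (hf : HighlyComposite f) (p p' : Fq[X])
    (hp : p.Monic) (hpirr : Irreducible p) (hp' : p'.Monic) (hp'irr : Irreducible p')
    (hdeg : p.natDegree < p'.natDegree) :
    mult p' f ≤ mult p f := by
  by_contra! hlt
  unfold mult at hlt
  obtain ⟨hfm, hmax⟩ := hf
  have hpp' : ¬Associated p p' := fun h => hdeg.ne (by rw [eq_of_monic_of_associated hp hp' h])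
  have hpr := hpirr.prime
  have hpr' := hp'irr.prime
  obtain ⟨c, hc⟩ := Nat.exists_eq_add_of_lt hlt
  obtain ⟨s, hs⟩ := Nat.exists_eq_add_of_lt hdeg
  set f' := EuclideanDomain.swapPow p p' f with hf'_def
  have hf' : f'.Monic := hfm.swapPow hp hp' hpr hpr' hpp'
  set g := X ^ ((c + 1) * (s + 1)) * f'
  have hg : g.Monic := (monic_X_pow _).mul hf'
  have hcp := hfm.coprimePart hp hp' hpr hpr' hpp'
  have hgdeg : g.natDegree = f.natDegree := by
    conv_rhs => rw [← EuclideanDomain.pow_mul_pow_mul_coprimePart hpr hpr' hpp' (x := f)]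
    rw [(monic_X_pow _).natDegree_mul hf', natDegree_X_pow, hf'_def, EuclideanDomain.swapPow,
      hp.natDegree_pow_mul_pow_mul hp' hcp, hp.natDegree_pow_mul_pow_mul hp' hcp, hc, hs]
    ring
  have hf'g : f' ≠ g := fun h => by
    have := congrArg natDegree h
    rw [(monic_X_pow _).natDegree_mul hf', natDegree_X_pow] at this
    lia
  have := tau_le_tau_swapPow hp hp' hpr hpr' hpp' hfm.ne_zero
  have := tau_lt_tau_of_dvd_of_ne hf' hg (dvd_mul_left _ _) hf'g
  have := hmax g hg hgdeg.le
  lia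

/-- In a highly composite polynomial, irreducibles of larger degree occur with smaller or
equal multiplicity. -/
theorem multiplicity_antitone_of_highlyComposite {Fq : Type} [Field Fq] [Fintype Fq]
    (f : Fq[X]) (hf : HighlyComposite f) (p p' : Fq[X])
    (hp : p.Monic) (hpirr : Irreducible p) (hp' : p'.Monic) (hp'irr : Irreducible p')
    (hdeg : p.natDegree < p'.natDegree) :
    mult p' f ≤ mult p f :=
  multiplicity_antitone_of_highlyComposite_general f hf p p' hp hpirr hp' hp'irr hdeg
end

section
/- Let q ≥ 2 be an integer and let s, r, S, R be positive integers with s·log q / log(1 + 1/r) = S·log q / log(1 + 1/R). Then s = S and r = R. In other words, each element of the set S_q = { s·log q / log(1 + 1/r) : s, r positive integers } has a unique representation of this form. -/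
/-!
Cancelling `log q` and exponentiating turns the hypothesis into
`((R + 1) / R) ^ s = ((r + 1) / r) ^ S`. Both sides are fractions in lowest terms, so
`R ^ s = r ^ S`. If `s < S` this forces `r ≤ R`, and then
`(1 + 1/R) ^ s ≤ (1 + 1/r) ^ s < (1 + 1/r) ^ S`, a contradiction; symmetrically `S < s` is
impossible, and for `s = S` the equation `R ^ s = r ^ s` gives `R = r`.
-/

open Real

theorem Nat.Coprime.right_eq_of_cross_mul_eq {a b c d : ℕ} (hab : a.Coprime b) (hcd : c.Coprime d)
    (h : a * d = c * b) : b = d :=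
  Nat.dvd_antisymm (hab.symm.dvd_of_dvd_mul_left (h ▸ _root_.dvd_mul_left b c))
    (hcd.symm.dvd_of_dvd_mul_left (h ▸ _root_.dvd_mul_left d a))

theorem Nat.coprime_succ_pow_pow (n s t : ℕ) : ((n + 1) ^ s).Coprime (n ^ t) :=
  Nat.Coprime.pow s t (by simp)

theorem pow_eq_pow_of_mul_div_log_eq {x y c : ℝ} (hx : 1 < x) (hy : 1 < y) (hc : c ≠ 0) {m n : ℕ}
    (h : m * c / log x = n * c / log y) : y ^ m = x ^ n := by
  have hlog : m * log y = n * log x := by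
    rw [div_eq_div_iff (log_pos hx).ne' (log_pos hy).ne'] at h
    exact mul_right_cancel₀ hc (by linear_combination h)
  refine log_injOn_pos (pow_pos (zero_lt_one.trans hy) m) (pow_pos (zero_lt_one.trans hx) n) ?_
  simpa only [log_pow] using hlog

theorem succ_pow_mul_pow_eq_of_one_add_inv_pow_eq {r R s S : ℕ} (hr : 0 < r) (hR : 0 < R)
    (h : (1 + 1 / (R : ℝ)) ^ s = (1 + 1 / (r : ℝ)) ^ S) :
    (R + 1) ^ s * r ^ S = (r + 1) ^ S * R ^ s := by
  have hr' : (r : ℝ) ≠ 0 := by positivity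
  have hR' : (R : ℝ) ≠ 0 := by positivity
  rw [one_add_div hr', one_add_div hR', div_pow, div_pow,
    div_eq_div_iff (by positivity) (by positivity)] at h
  exact_mod_cast h

theorem Nat.le_of_pow_eq_pow_of_le {r R s S : ℕ} (hs : s ≠ 0) (hr : 0 < r) (h : R ^ s = r ^ S)
    (hsS : s ≤ S) : r ≤ R := by
  by_contra! hRr
  have := (Nat.pow_lt_pow_left hRr hs).trans_le (Nat.pow_le_pow_right hr hsS)
  omega

theorem one_add_inv_pow_lt_of_pow_eq_pow {r R s S : ℕ} (hs : s ≠ 0) (hr : 0 < r)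
    (h : R ^ s = r ^ S) (hsS : s < S) :
    (1 + 1 / (R : ℝ)) ^ s < (1 + 1 / (r : ℝ)) ^ S := by
  have hrR : (r : ℝ) ≤ R := by exact_mod_cast Nat.le_of_pow_eq_pow_of_le hs hr h hsS.le
  calc (1 + 1 / (R : ℝ)) ^ s ≤ (1 + 1 / (r : ℝ)) ^ s := by gcongr
    _ < (1 + 1 / (r : ℝ)) ^ S := pow_lt_pow_right₀ (by simp [hr]) hsS

/-- Each element of `S_q = { s log q / log(1 + 1/r) : s, r ≥ 1 }` has a unique
representation of this form. -/
theorem S_representation_unique (q : ℕ) (hq : 2 ≤ q) (s r S R : ℕ)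
    (hs : 0 < s) (hr : 0 < r) (hS : 0 < S) (hR : 0 < R)
    (h : (s : ℝ) * Real.log q / Real.log (1 + 1 / (r : ℝ)) =
      (S : ℝ) * Real.log q / Real.log (1 + 1 / (R : ℝ))) :
    s = S ∧ r = R := by
  have one_lt {n : ℕ} (hn : 0 < n) : 1 < 1 + 1 / (n : ℝ) := by simp [hn]
  have hpow : (1 + 1 / (R : ℝ)) ^ s = (1 + 1 / (r : ℝ)) ^ S :=
    pow_eq_pow_of_mul_div_log_eq (one_lt hr) (one_lt hR)
      (log_pos (by exact_mod_cast hq)).ne' h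
  have hden : R ^ s = r ^ S := (Nat.coprime_succ_pow_pow R s s).right_eq_of_cross_mul_eq
    (Nat.coprime_succ_pow_pow r S S) (succ_pow_mul_pow_eq_of_one_add_inv_pow_eq hr hR hpow)
  rcases lt_trichotomy s S with hsS | rfl | hSs
  · exact absurd hpow (one_add_inv_pow_lt_of_pow_eq_pow hs.ne' hr hden hsS).ne
  · exact ⟨rfl, Nat.pow_left_injective hs.ne' hden.symm⟩
  · exact absurd hpow (one_add_inv_pow_lt_of_pow_eq_pow hS.ne' hR hden.symm hSs).ne'
end

section
/- For every x > 0, the function f ↦ τ(f)·q^{−deg f/x} attains its maximum over all monic polynomials f ∈ 𝔽_q[t]; that is, there exists a monic h ∈ 𝔽_q[t] with τ(h)·q^{−deg h/x} ≥ τ(f)·q^{−deg f/x} for all monic f ∈ 𝔽_q[t]. -/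
open Polynomial

/-! Split the prime factors of `f` at a degree `k`. There are finitely many, say `c`, monic
irreducibles of degree `< k`, each occurring at most `deg f` times, and at most `deg f / k` factors
of degree `≥ k`, so `τ(f) ≤ (deg f + 1)^c · 2^(deg f / k)`. Choosing `k` with
`q^(-k/(2x)) ≤ 1/2` gives `τ(f) q^(-deg f/x) ≤ (deg f + 1)^c q^(-deg f/(2x)) → 0`, so only the
finitely many `f` of small degree can compete with `f = 1`, whose weight is `1`. -/

open UniqueFactorizationMonoid Filter Topology

namespace Multiset

variable {α : Type*} [DecidableEq α]

theorem coe_toFinset_powerset (T : Multiset α) :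
    (T.powerset.toFinset : Set (Multiset α)) = {A | A ≤ T} := by
  ext; simp

theorem finite_setOf_le (T : Multiset α) : {A | A ≤ T}.Finite :=
  T.coe_toFinset_powerset ▸ T.powerset.toFinset.finite_toSet

theorem ncard_setOf_le_le_two_pow (T : Multiset α) : {A | A ≤ T}.ncard ≤ 2 ^ card T := by
  rw [← coe_toFinset_powerset, Set.ncard_coe_finset, ← card_powerset]
  exact toFinset_card_le _

theorem ncard_setOf_le_le_of_forall_mem (T : Multiset α) (S : Finset α) (hT : ∀ a ∈ T, a ∈ S) :
    {A | A ≤ T}.ncard ≤ (card T + 1) ^ S.card := by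
  let target : Finset (S → ℕ) := Fintype.piFinset fun _ => Finset.range (card T + 1)
  have hcard : (target : Set (S → ℕ)).ncard = (card T + 1) ^ S.card := by
    rw [Set.ncard_coe_finset, Fintype.card_piFinset]
    simp
  refine hcard ▸ Set.ncard_le_ncard_of_injOn (fun A s => count s.1 A) ?_ ?_ (Finset.finite_toSet _)
  · intro A hA
    simpa [target, Nat.lt_succ_iff] using fun s _ => (count_le_card _ _).trans (card_le_card hA)
  · intro A hA B hB hAB
    ext a
    by_cases ha : a ∈ S
    · exact congrFun hAB ⟨a, ha⟩
    · have hT' : a ∉ T := fun h => ha (hT a h)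
      rw [count_eq_zero_of_notMem fun h => hT' (mem_of_le hA h),
        count_eq_zero_of_notMem fun h => hT' (mem_of_le hB h)]

theorem ncard_setOf_le_le (T : Multiset α) (S : Finset α) (p : α → Prop) [DecidablePred p]
    (hS : ∀ a ∈ T, p a → a ∈ S) :
    {A | A ≤ T}.ncard ≤ (card T + 1) ^ S.card * 2 ^ card (T.filter (¬p ·)) := by
  have hsplit : Set.InjOn (fun A => (A.filter p, A.filter (¬p ·))) {A | A ≤ T} := by
    intro A _ B _ hAB
    simp only [Prod.mk.injEq] at hAB
    rw [← filter_add_not p A, ← filter_add_not p B, hAB.1, hAB.2]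
  calc {A | A ≤ T}.ncard
      ≤ ({A | A ≤ T.filter p} ×ˢ {B | B ≤ T.filter (¬p ·)}).ncard :=
        Set.ncard_le_ncard_of_injOn (fun A => (A.filter p, A.filter (¬p ·)))
          (fun _ hA => ⟨filter_le_filter p hA, filter_le_filter (¬p ·) hA⟩)
          hsplit ((finite_setOf_le _).prod (finite_setOf_le _))
    _ = {A | A ≤ T.filter p}.ncard * {B | B ≤ T.filter (¬p ·)}.ncard := Set.ncard_prod
    _ ≤ (card T + 1) ^ S.card * 2 ^ card (T.filter (¬p ·)) := by
        gcongr
        · refine (ncard_setOf_le_le_of_forall_mem _ S fun a ha => ?_).trans ?_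
          · exact hS a (mem_of_mem_filter ha) (of_mem_filter ha)
          · exact Nat.pow_le_pow_left (by simpa using card_le_card (filter_le p T)) _
        · exact ncard_setOf_le_le_two_pow _

end Multiset

theorem tendsto_add_one_pow_mul_pow_atTop_nhds_zero (c : ℕ) {s : ℝ} (hs0 : 0 ≤ s) (hs1 : s < 1) :
    Tendsto (fun n : ℕ => ((n : ℝ) + 1) ^ c * s ^ n) atTop (𝓝 0) := by
  have h := (tendsto_pow_const_mul_const_pow_of_lt_one c hs0 hs1).const_mul ((2 : ℝ) ^ c)
  rw [mul_zero] at h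
  refine squeeze_zero' (Eventually.of_forall fun n => by positivity) ?_ h
  filter_upwards [eventually_ge_atTop 1] with n hn
  have : (n : ℝ) + 1 ≤ 2 * n := by
    have : (1 : ℝ) ≤ n := by exact_mod_cast hn
    linarith
  calc ((n : ℝ) + 1) ^ c * s ^ n ≤ (2 * n) ^ c * s ^ n := by gcongr
    _ = 2 ^ c * (n ^ c * s ^ n) := by ring

theorem two_pow_mul_pow_le_one {s : ℝ} {k m n : ℕ} (hs0 : 0 ≤ s) (hs1 : s ≤ 1)
    (hk : s ^ k ≤ 1 / 2) (hkm : k * m ≤ n) : 2 ^ m * s ^ n ≤ 1 := by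
  calc (2 : ℝ) ^ m * s ^ n ≤ 2 ^ m * s ^ (k * m) :=
        mul_le_mul_of_nonneg_left (pow_le_pow_of_le_one hs0 hs1 hkm) (by positivity)
    _ = (2 * s ^ k) ^ m := by rw [mul_pow, pow_mul]
    _ ≤ 1 := pow_le_one₀ (by positivity) (by linarith)

namespace Polynomial

theorem finite_setOf_natDegree_le {R : Type*} [Semiring R] [Finite R] (N : ℕ) :
    {p : R[X] | p.natDegree ≤ N}.Finite := by
  refine Set.Finite.of_finite_image (f := fun p (i : Fin (N + 1)) => p.coeff i) (Set.toFinite _)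
    fun p hp q hq hpq => ext fun n => ?_
  by_cases hn : n ≤ N
  · exact congrFun hpq ⟨n, Nat.lt_succ_of_le hn⟩
  · rw [coeff_eq_zero_of_natDegree_lt (lt_of_le_of_lt hp (not_le.1 hn)),
      coeff_eq_zero_of_natDegree_lt (lt_of_le_of_lt hq (not_le.1 hn))]

variable {K : Type} [Field K]

theorem tau_one : tau (1 : K[X]) = 1 := by
  have : {d : K[X] | d.Monic ∧ d ∣ 1} = {1} := by
    ext d
    refine ⟨fun ⟨hd, hd1⟩ => hd.eq_one_of_isUnit (isUnit_of_dvd_one hd1), ?_⟩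
    rintro rfl
    exact ⟨monic_one, dvd_rfl⟩
  rw [tau, this, Set.ncard_singleton]

section

variable [DecidableEq K]

theorem natDegree_eq_sum_natDegree_normalizedFactors {f : K[X]} (hf : f ≠ 0) :
    f.natDegree = ((normalizedFactors f).map natDegree).sum := by
  rw [← natDegree_multiset_prod _ (zero_notMem_normalizedFactors f),
    prod_normalizedFactors_eq hf, natDegree_eq_of_degree_eq degree_normalize]

theorem card_normalizedFactors_le_natDegree (f : K[X]) :
    Multiset.card (normalizedFactors f) ≤ f.natDegree := by
  rcases eq_or_ne f 0 with rfl | hf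
  · simp
  rw [natDegree_eq_sum_natDegree_normalizedFactors hf, ← Multiset.card_map natDegree]
  have hpos : ∀ d ∈ (normalizedFactors f).map natDegree, 1 ≤ d := by
    simp only [Multiset.mem_map]
    rintro _ ⟨p, hp, rfl⟩
    exact (irreducible_of_normalized_factor p hp).natDegree_pos
  simpa using Multiset.card_nsmul_le_sum hpos

theorem mul_card_filter_normalizedFactors_le_natDegree (f : K[X]) (k : ℕ) :
    k * Multiset.card ((normalizedFactors f).filter (¬·.natDegree < k)) ≤ f.natDegree := by
  rcases eq_or_ne f 0 with rfl | hf
  · simp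
  set L := (normalizedFactors f).filter (¬·.natDegree < k)
  have hL : ∀ d ∈ L.map natDegree, k ≤ d := by
    simp only [Multiset.mem_map]
    rintro _ ⟨p, hp, rfl⟩
    exact not_lt.1 (Multiset.mem_filter.1 hp).2
  obtain ⟨M, hM⟩ := Multiset.le_iff_exists_add.1
    (Multiset.filter_le (¬·.natDegree < k) (normalizedFactors f))
  calc k * Multiset.card L = Multiset.card (L.map natDegree) • k := by simp [mul_comm]
    _ ≤ (L.map natDegree).sum := Multiset.card_nsmul_le_sum hL
    _ ≤ f.natDegree := by
        rw [natDegree_eq_sum_natDegree_normalizedFactors hf, hM, Multiset.map_add,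
          Multiset.sum_add]
        exact Nat.le_add_right _ _

theorem tau_le_ncard_setOf_le_normalizedFactors {f : K[X]} (hf : f ≠ 0) :
    tau f ≤ {A | A ≤ normalizedFactors f}.ncard := by
  refine Set.ncard_le_ncard_of_injOn normalizedFactors
    (fun d ⟨hd, hdf⟩ => (dvd_iff_normalizedFactors_le_normalizedFactors hd.ne_zero hf).1 hdf)
    (fun d ⟨hd, _⟩ e ⟨he, _⟩ hde => eq_of_monic_of_associated hd he ?_)
    (Multiset.finite_setOf_le _)
  exact (associated_iff_normalizedFactors_eq_normalizedFactors hd.ne_zero he.ne_zero).2 hde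

end

theorem exists_tau_le [Finite K] (k : ℕ) :
    ∃ c : ℕ, ∀ f : K[X], f ≠ 0 →
      ∃ m, k * m ≤ f.natDegree ∧ tau f ≤ (f.natDegree + 1) ^ c * 2 ^ m := by
  classical
  let S := (finite_setOf_natDegree_le (R := K) k).toFinset
  refine ⟨S.card, fun f hf => ⟨_, mul_card_filter_normalizedFactors_le_natDegree f k, ?_⟩⟩
  calc tau f ≤ {A | A ≤ normalizedFactors f}.ncard := tau_le_ncard_setOf_le_normalizedFactors hf
    _ ≤ (Multiset.card (normalizedFactors f) + 1) ^ S.card *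
          2 ^ Multiset.card ((normalizedFactors f).filter (¬·.natDegree < k)) :=
        Multiset.ncard_setOf_le_le _ S (·.natDegree < k) fun p _ hp => by simpa [S] using hp.le
    _ ≤ _ := by gcongr; exact card_normalizedFactors_le_natDegree f

section

variable [Fintype K]

noncomputable def weightedTau (x : ℝ) (f : K[X]) : ℝ :=
  tau f * (Fintype.card K : ℝ) ^ (-(f.natDegree : ℝ) / x)

theorem weightedTau_one (x : ℝ) : weightedTau x (1 : K[X]) = 1 := by
  simp [weightedTau, tau_one]

theorem exists_weightedTau_le {x : ℝ} (hx : 0 < x) :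
    ∃ c : ℕ, ∃ s : ℝ, 0 ≤ s ∧ s < 1 ∧
      ∀ f : K[X], f ≠ 0 → weightedTau x f ≤ (f.natDegree + 1) ^ c * s ^ f.natDegree := by
  have hq : (1 : ℝ) < Fintype.card K := by exact_mod_cast Fintype.one_lt_card
  set q : ℝ := (Fintype.card K : ℝ)
  set s := q ^ (-(2 * x)⁻¹)
  have hs0 : 0 < s := Real.rpow_pos_of_pos (by linarith) _
  have hs1 : s < 1 := Real.rpow_lt_one_of_one_lt_of_neg hq (by simpa using hx)
  obtain ⟨k, hk⟩ := exists_pow_lt_of_lt_one (by norm_num : (0 : ℝ) < 1 / 2) hs1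
  obtain ⟨c, hc⟩ := exists_tau_le (K := K) k
  refine ⟨c, s, hs0.le, hs1, fun f hf => ?_⟩
  obtain ⟨m, hkm, hτ⟩ := hc f hf
  set n := f.natDegree
  have hq_pow : q ^ (-(n : ℝ) / x) = s ^ n * s ^ n := by
    rw [← pow_add, ← Real.rpow_mul_natCast (by linarith)]
    congr 1
    field_simp
    push_cast
    ring
  calc weightedTau x f = tau f * (s ^ n * s ^ n) := by rw [weightedTau, hq_pow]
    _ ≤ ((n + 1) ^ c * 2 ^ m) * (s ^ n * s ^ n) := by gcongr; exact_mod_cast hτ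
    _ = (n + 1) ^ c * s ^ n * (2 ^ m * s ^ n) := by ring
    _ ≤ (n + 1) ^ c * s ^ n :=
        mul_le_of_le_one_right (by positivity) (two_pow_mul_pow_le_one hs0.le hs1.le hk.le hkm)

theorem exists_weightedTau_lt_one {x : ℝ} (hx : 0 < x) :
    ∃ N : ℕ, ∀ f : K[X], f ≠ 0 → N ≤ f.natDegree → weightedTau x f < 1 := by
  obtain ⟨c, s, hs0, hs1, hbound⟩ := exists_weightedTau_le (K := K) hx
  obtain ⟨N, hN⟩ := eventually_atTop.1
    ((tendsto_add_one_pow_mul_pow_atTop_nhds_zero c hs0 hs1).eventually_lt_const one_pos)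
  exact ⟨N, fun f hf hfN => (hbound f hf).trans_lt (hN _ hfN)⟩

end

end Polynomial

/-- For every `x > 0`, the function `f ↦ τ(f) q^{-deg f / x}` attains its maximum over all
monic polynomials. -/
theorem exists_max_weighted_tau {Fq : Type} [Field Fq] [Fintype Fq] (x : ℝ) (hx : 0 < x) :
    ∃ h : Fq[X], h.Monic ∧ ∀ f : Fq[X], f.Monic →
      (tau f : ℝ) * (Fintype.card Fq : ℝ) ^ (-(f.natDegree : ℝ) / x) ≤
      (tau h : ℝ) * (Fintype.card Fq : ℝ) ^ (-(h.natDegree : ℝ) / x) := by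
  obtain ⟨N, hN⟩ := exists_weightedTau_lt_one (K := Fq) hx
  have hfin : {f : Fq[X] | f.Monic ∧ f.natDegree ≤ N}.Finite :=
    (finite_setOf_natDegree_le N).subset fun _ hf => hf.2
  have h1 : (1 : Fq[X]) ∈ {f : Fq[X] | f.Monic ∧ f.natDegree ≤ N} := ⟨monic_one, by simp⟩
  obtain ⟨h, ⟨hh, -⟩, hmax⟩ := Set.exists_max_image _ (weightedTau x) hfin ⟨1, h1⟩
  refine ⟨h, hh, fun f hf => ?_⟩
  rcases le_or_gt f.natDegree N with hfN | hNf
  · exact hmax f ⟨hf, hfN⟩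
  · calc weightedTau x f ≤ 1 := (hN f hf.ne_zero hNf.le).le
      _ = weightedTau x 1 := (weightedTau_one x).symm
      _ ≤ weightedTau x h := hmax 1 h1
end

section
/- Let x > 0 with x ∉ S, where S = { s·log q / log(1 + 1/r) : s, r positive integers }. If a monic polynomial h ∈ 𝔽_q[t] satisfies τ(h)·q^{−deg h/x} ≥ τ(f)·q^{−deg f/x} for all monic f ∈ 𝔽_q[t], then for every monic irreducible p ∈ 𝔽_q[t] the multiplicity of p in h equals ⌊1/(q^{deg p/x} − 1)⌋; in particular the maximizer h is unique. -/
open Polynomial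

/-- The set `S_q = { s log q / log(1 + 1/r) : s, r ≥ 1 }`. -/
def Sset (q : ℕ) : Set ℝ :=
  {x : ℝ | ∃ s r : ℕ, 0 < s ∧ 0 < r ∧ x = (s : ℝ) * Real.log q / Real.log (1 + 1 / (r : ℝ))}

/-!
Write a maximizer as `h = pᵐ g` with `p ∤ g` and put `v = q^{deg p / x} > 1`. Since `τ` is
multiplicative on coprime factors and `τ(pᵏ) = k + 1`, the objective at `pᵏ g` is
`(k + 1) v⁻ᵏ` times a positive constant, so `k ↦ (k + 1) v⁻ᵏ` is maximal at `k = m`. Comparing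
with `k = m ± 1` gives `m (v - 1) ≤ 1 ≤ (m + 1) (v - 1)`, and equality on the right would mean
`v = 1 + 1 / (m + 1)`, which `x ∉ S` excludes. Hence `m = ⌊1 / (v - 1)⌋`, and unique factorization
turns these multiplicities into uniqueness of the maximizer.
-/
theorem mul_inv_pow_le_mul_inv_pow_succ_iff {v : ℝ} (hv : 0 < v) (a b : ℝ) (n : ℕ) :
    a * v⁻¹ ^ n ≤ b * v⁻¹ ^ (n + 1) ↔ a * v ≤ b := by
  rw [pow_succ', ← mul_assoc, mul_le_mul_iff_of_pos_right (by positivity), ← div_eq_mul_inv,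
    le_div_iff₀ hv]

theorem mul_inv_pow_succ_le_mul_inv_pow_iff {v : ℝ} (hv : 0 < v) (a b : ℝ) (n : ℕ) :
    b * v⁻¹ ^ (n + 1) ≤ a * v⁻¹ ^ n ↔ b ≤ a * v := by
  rw [pow_succ, mul_comm (v⁻¹ ^ n), ← mul_assoc, mul_le_mul_iff_of_pos_right (by positivity),
    ← div_eq_mul_inv, div_le_iff₀ hv]

theorem eq_floor_of_forall_succ_mul_inv_pow_le {v : ℝ} (hv : 1 < v)
    (hv_ne : ∀ r : ℕ, 0 < r → v ≠ 1 + 1 / r) {m : ℕ}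
    (hmax : ∀ k : ℕ, ((k : ℝ) + 1) * v⁻¹ ^ k ≤ ((m : ℝ) + 1) * v⁻¹ ^ m) :
    m = ⌊1 / (v - 1)⌋₊ := by
  have hv0 : 0 < v - 1 := sub_pos.2 hv
  have hm_le : (m : ℝ) ≤ 1 / (v - 1) := by
    rcases m with _ | n
    · simpa using hv0.le
    have h := (mul_inv_pow_le_mul_inv_pow_succ_iff (by positivity) _ _ n).1 (hmax n)
    rw [le_div_iff₀ hv0]
    push_cast at h ⊢
    linarith
  have hm_lt : 1 / (v - 1) < (m : ℝ) + 1 := by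
    have h := (mul_inv_pow_succ_le_mul_inv_pow_iff (by positivity) _ _ m).1 (hmax (m + 1))
    have h_ne : ((m + 1 : ℕ) : ℝ) + 1 ≠ ((m : ℝ) + 1) * v := fun h_eq ↦
      hv_ne (m + 1) m.succ_pos (by field_simp; push_cast at h_eq ⊢; linarith)
    rw [div_lt_iff₀ hv0]
    push_cast at h h_ne
    nlinarith [lt_of_le_of_ne h h_ne]
  exact ((Nat.floor_eq_iff (by positivity)).2 ⟨hm_le, hm_lt⟩).symm

theorem rpow_div_ne_one_add_one_div_of_notMem_Sset {q d r : ℕ} {x : ℝ} (hq : 0 < q)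
    (hd : 0 < d) (hr : 0 < r) (hx : x ≠ 0) (hxS : x ∉ Sset q) :
    (q : ℝ) ^ ((d : ℝ) / x) ≠ 1 + 1 / r := by
  intro h_eq
  have hlog : (d : ℝ) / x * Real.log q = Real.log (1 + 1 / r) := by
    rw [← Real.log_rpow (by positivity), h_eq]
  have hL : Real.log (1 + 1 / r) ≠ 0 := (Real.log_pos (lt_add_of_pos_right 1 (by positivity))).ne'
  refine hxS ⟨d, r, hd, hr, ?_⟩
  rw [eq_div_iff hL, ← hlog]
  field_simp

section Divisors

variable {K : Type} [Field K]

theorem tau_eq_natCard (f : K[X]) : tau f = Nat.card {d : K[X] // d.Monic ∧ d ∣ f} :=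
  (Nat.card_coe_set_eq _).symm

theorem tau_pos {f : K[X]} (hf : f ≠ 0) : 0 < tau f := by
  have := fintypeSubtypeMonicDvd f hf
  rw [tau_eq_natCard]
  exact Nat.card_pos_iff.2 ⟨⟨⟨1, monic_one, one_dvd f⟩⟩, inferInstance⟩

theorem tau_mul_of_isCoprime {a b : K[X]} (hab : IsCoprime a b) :
    tau (a * b) = tau a * tau b := by
  let F : {d : K[X] // d.Monic ∧ d ∣ a} × {d : K[X] // d.Monic ∧ d ∣ b} →
      {d : K[X] // d.Monic ∧ d ∣ a * b} :=
    fun d ↦ ⟨d.1.1 * d.2.1, d.1.2.1.mul d.2.2.1, mul_dvd_mul d.1.2.2 d.2.2.2⟩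
  have hF : F.Bijective := by
    constructor
    · rintro ⟨⟨d₁, hd₁, hd₁a⟩, ⟨d₂, hd₂, hd₂b⟩⟩ ⟨⟨e₁, he₁, he₁a⟩, ⟨e₂, he₂, he₂b⟩⟩ h
      have h : d₁ * d₂ = e₁ * e₂ := congrArg Subtype.val h
      have h₁ : d₁ = e₁ := eq_of_monic_of_associated hd₁ he₁ <| associated_of_dvd_dvd
        (((hab.of_isCoprime_of_dvd_left hd₁a).of_isCoprime_of_dvd_right he₂b).dvd_of_dvd_mul_right
          (h ▸ dvd_mul_right d₁ d₂))
        (((hab.of_isCoprime_of_dvd_left he₁a).of_isCoprime_of_dvd_right hd₂b).dvd_of_dvd_mul_right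
          (h ▸ dvd_mul_right e₁ e₂))
      subst h₁
      have h₂ : d₂ = e₂ := mul_left_cancel₀ hd₁.ne_zero h
      subst h₂
      rfl
    · rintro ⟨d, hd, hdab⟩
      obtain ⟨d₁, d₂, hd₁a, hd₂b, rfl⟩ := exists_dvd_and_dvd_of_dvd_mul hdab
      have hd₁ : d₁ ≠ 0 := left_ne_zero_of_mul hd.ne_zero
      set c := d₁.leadingCoeff
      have hc : c ≠ 0 := leadingCoeff_ne_zero.2 hd₁
      have hd₁' : (d₁ * C c⁻¹).Monic := monic_mul_leadingCoeff_inv hd₁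
      have h_eq : d₁ * C c⁻¹ * (d₂ * C c) = d₁ * d₂ := by
        rw [mul_mul_mul_comm, ← C_mul, inv_mul_cancel₀ hc, C_1, mul_one]
      refine ⟨⟨⟨d₁ * C c⁻¹, hd₁', ?_⟩, ⟨d₂ * C c, hd₁'.of_mul_monic_left (h_eq ▸ hd), ?_⟩⟩,
        Subtype.ext h_eq⟩
      · exact (associated_mul_unit_left d₁ _ (isUnit_C.2 (inv_ne_zero hc).isUnit)).dvd.trans hd₁a
      · exact (associated_mul_unit_left d₂ _ (isUnit_C.2 hc.isUnit)).dvd.trans hd₂b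
  rw [tau_eq_natCard, tau_eq_natCard, tau_eq_natCard, ← Nat.card_prod]
  exact (Nat.card_eq_of_bijective F hF).symm

theorem tau_pow_of_irreducible {p : K[X]} (hp : p.Monic) (hirr : Irreducible p) (k : ℕ) :
    tau (p ^ k) = k + 1 := by
  let F : Fin (k + 1) → {d : K[X] // d.Monic ∧ d ∣ p ^ k} :=
    fun i ↦ ⟨p ^ (i : ℕ), hp.pow i, pow_dvd_pow p i.is_le⟩
  have hF : F.Bijective := by
    constructor
    · intro i j h
      exact Fin.ext (pow_injective_of_not_isUnit hirr.not_isUnit hp.ne_zero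
        (congrArg Subtype.val h))
    · rintro ⟨d, hd, hdp⟩
      obtain ⟨i, hi, hdi⟩ := (dvd_prime_pow hirr.prime k).1 hdp
      exact ⟨⟨i, Nat.lt_succ_of_le hi⟩,
        Subtype.ext (eq_of_monic_of_associated (hp.pow i) hd hdi.symm)⟩
  rw [tau_eq_natCard, ← Nat.card_eq_of_bijective F hF, Nat.card_fin]

open UniqueFactorizationMonoid in
theorem Polynomial.Monic.eq_of_forall_multiplicity_eq {f g : K[X]} (hf : f.Monic) (hg : g.Monic)
    (h : ∀ p : K[X], p.Monic → Irreducible p → multiplicity p f = multiplicity p g) :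
    f = g := by
  classical
  refine eq_of_monic_of_associated hf hg <|
    (associated_iff_normalizedFactors_eq_normalizedFactors hf.ne_zero hg.ne_zero).2 <|
      Multiset.ext.2 fun p ↦ ?_
  by_cases hp : Irreducible p ∧ p.Monic
  · rw [← hp.2.normalize_eq_self,
      ← multiplicity_eq_count_normalizedFactors hp.1 hf.ne_zero,
      ← multiplicity_eq_count_normalizedFactors hp.1 hg.ne_zero,
      h p hp.2 hp.1]
  · have hp_notMem {q : K[X]} (hq : q ≠ 0) : p ∉ normalizedFactors q :=
      fun hmem ↦ hp (((Polynomial.mem_normalizedFactors_iff hq).1 hmem).imp_right And.left)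
    rw [Multiset.count_eq_zero.2 (hp_notMem hf.ne_zero),
      Multiset.count_eq_zero.2 (hp_notMem hg.ne_zero)]

noncomputable def divisorWeight (Q x : ℝ) (f : K[X]) : ℝ :=
  tau f * Q ^ (-(f.natDegree : ℝ) / x)

theorem divisorWeight_pow_mul {Q x : ℝ} (hQ : 0 < Q) {p g : K[X]} (hp : p.Monic)
    (hirr : Irreducible p) (hpg : ¬p ∣ g) (k : ℕ) :
    divisorWeight Q x (p ^ k * g) =
      (k + 1) * (Q ^ ((p.natDegree : ℝ) / x))⁻¹ ^ k * divisorWeight Q x g := by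
  have hg : g ≠ 0 := by rintro rfl; exact hpg (dvd_zero p)
  have h_rpow : Q ^ (-((k * p.natDegree + g.natDegree : ℕ) : ℝ) / x) =
      (Q ^ ((p.natDegree : ℝ) / x))⁻¹ ^ k * Q ^ (-(g.natDegree : ℝ) / x) := by
    rw [← Real.rpow_neg hQ.le, ← Real.rpow_natCast, ← Real.rpow_mul hQ.le, ← Real.rpow_add hQ]
    congr 1
    push_cast
    ring
  rw [divisorWeight, divisorWeight, natDegree_mul (pow_ne_zero k hp.ne_zero) hg, natDegree_pow,
    h_rpow, tau_mul_of_isCoprime ((hirr.coprime_iff_not_dvd.2 hpg).pow_left),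
    tau_pow_of_irreducible hp hirr]
  push_cast
  ring

theorem multiplicity_eq_floor_of_forall_divisorWeight_le {Q x : ℝ} (hQ : 1 < Q) (hx : 0 < x)
    {h p : K[X]} (hh : h.Monic)
    (hmax : ∀ f : K[X], f.Monic → divisorWeight Q x f ≤ divisorWeight Q x h)
    (hp : p.Monic) (hirr : Irreducible p)
    (hne : ∀ r : ℕ, 0 < r → Q ^ ((p.natDegree : ℝ) / x) ≠ 1 + 1 / r) :
    multiplicity p h = ⌊1 / (Q ^ ((p.natDegree : ℝ) / x) - 1)⌋₊ := by
  have hQ0 : 0 < Q := zero_lt_one.trans hQ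
  obtain ⟨g, hg_eq, hpg⟩ :=
    (FiniteMultiplicity.of_not_isUnit hirr.not_isUnit hh.ne_zero).exists_eq_pow_mul_and_not_dvd
  have hg : g.Monic := (hp.pow _).of_mul_monic_left (hg_eq ▸ hh)
  have hwg : 0 < divisorWeight Q x g :=
    mul_pos (Nat.cast_pos.2 (tau_pos hg.ne_zero)) (Real.rpow_pos_of_pos hQ0 _)
  have hd : (0 : ℝ) < p.natDegree / x := div_pos (Nat.cast_pos.2 hirr.natDegree_pos) hx
  refine eq_floor_of_forall_succ_mul_inv_pow_le (Real.one_lt_rpow hQ hd) hne fun k ↦ ?_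
  have hk := hmax (p ^ k * g) ((hp.pow k).mul hg)
  rw [hg_eq, divisorWeight_pow_mul hQ0 hp hirr hpg, divisorWeight_pow_mul hQ0 hp hirr hpg] at hk
  exact le_of_mul_le_mul_right hk hwg

end Divisors

/-- For `x ∉ S`, a monic maximizer of `f ↦ τ(f) q^{-deg f / x}` has multiplicity
`⌊1/(q^{deg p / x} - 1)⌋` at each monic irreducible `p`; in particular it is unique. -/
theorem maximizer_multiplicities_of_not_mem_S {Fq : Type} [Field Fq] [Fintype Fq]
    (x : ℝ) (hx : 0 < x) (hxS : x ∉ Sset (Fintype.card Fq))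
    (h : Fq[X]) (hmonic : h.Monic)
    (hmax : ∀ f : Fq[X], f.Monic →
      (tau f : ℝ) * (Fintype.card Fq : ℝ) ^ (-(f.natDegree : ℝ) / x) ≤
      (tau h : ℝ) * (Fintype.card Fq : ℝ) ^ (-(h.natDegree : ℝ) / x)) :
    (∀ p : Fq[X], p.Monic → Irreducible p →
      mult p h = ⌊1 / ((Fintype.card Fq : ℝ) ^ ((p.natDegree : ℝ) / x) - 1)⌋₊) ∧
    (∀ h' : Fq[X], h'.Monic →
      (∀ f : Fq[X], f.Monic →
        (tau f : ℝ) * (Fintype.card Fq : ℝ) ^ (-(f.natDegree : ℝ) / x) ≤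
        (tau h' : ℝ) * (Fintype.card Fq : ℝ) ^ (-(h'.natDegree : ℝ) / x)) →
      h' = h) := by
  have hq : 1 < (Fintype.card Fq : ℝ) := by exact_mod_cast Fintype.one_lt_card
  have hmult : ∀ h' : Fq[X], h'.Monic →
      (∀ f : Fq[X], f.Monic → divisorWeight (Fintype.card Fq) x f ≤
        divisorWeight (Fintype.card Fq) x h') →
      ∀ p : Fq[X], p.Monic → Irreducible p →
        multiplicity p h' = ⌊1 / ((Fintype.card Fq : ℝ) ^ ((p.natDegree : ℝ) / x) - 1)⌋₊ :=
    fun h' hh' hmax' p hp hirr ↦ multiplicity_eq_floor_of_forall_divisorWeight_le hq hx hh'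
      hmax' hp hirr fun _ hr ↦ rpow_div_ne_one_add_one_div_of_notMem_Sset Fintype.card_pos
        hirr.natDegree_pos hr hx.ne' hxS
  refine ⟨hmult h hmonic hmax, fun h' hh' hmax' ↦ hh'.eq_of_forall_multiplicity_eq hmonic ?_⟩
  intro p hp hirr
  rw [hmult h' hh' hmax' p hp hirr, hmult h hmonic hmax p hp hirr]
end

section
/- For every x > 0 there is one and only one x-superior highly composite polynomial, namely the polynomial ĥ(x) whose multiplicity at each monic irreducible p ∈ 𝔽_q[t] equals a_{deg p}(x) = ⌊1/(q^{deg p/x} − 1)⌋. -/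
/-!
With `θ = q ^ (1 / x)` and `v_p(f)` the multiplicity of the monic irreducible `p` in `f`, the
weight `τ(f) q^(-deg f / x)` factors as `∏ p, (v_p(f) + 1) / (θ ^ deg p) ^ v_p(f)`. For
`r = θ ^ deg p > 1` the local factor `e ↦ (e + 1) / r ^ e` increases as long as
`(e + 1) (r - 1) ≤ 1` and strictly decreases afterwards, so it is maximal at
`e = ⌊1 / (r - 1)⌋`, strictly so against larger `e`. Hence `ĥ(x)` has the largest weight of all
monic polynomials, and strictly larger weight than any monic `f` not dividing it, in particular
than any `f` of larger degree. An `x`-SHC polynomial `h` can therefore not have smaller degree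
than `ĥ(x)`, and then has the same weight, so it divides `ĥ(x)` and equals it.
-/

open Polynomial

/-- `h = ĥ(x)`: the monic polynomial whose multiplicity at each monic irreducible `p`
equals `⌊1/(q^{deg p / x} - 1)⌋`. -/
noncomputable def IsHhat {Fq : Type} [Field Fq] [Fintype Fq] (x : ℝ) (h : Fq[X]) : Prop :=
  h.Monic ∧ ∀ p : Fq[X], p.Monic → Irreducible p →
    mult p h = ⌊1 / ((Fintype.card Fq : ℝ) ^ ((p.natDegree : ℝ) / x) - 1)⌋₊

/-- `h` is an `x`-superior highly composite polynomial. -/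
noncomputable def IsSHC {Fq : Type} [Field Fq] [Fintype Fq] (x : ℝ) (h : Fq[X]) : Prop :=
  h.Monic ∧
    (∀ f : Fq[X], f.Monic → f.natDegree ≤ h.natDegree →
      (tau f : ℝ) * (Fintype.card Fq : ℝ) ^ (-(f.natDegree : ℝ) / x) ≤
      (tau h : ℝ) * (Fintype.card Fq : ℝ) ^ (-(h.natDegree : ℝ) / x)) ∧
    (∀ f : Fq[X], f.Monic → h.natDegree < f.natDegree →
      (tau f : ℝ) * (Fintype.card Fq : ℝ) ^ (-(f.natDegree : ℝ) / x) <
      (tau h : ℝ) * (Fintype.card Fq : ℝ) ^ (-(h.natDegree : ℝ) / x))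

open UniqueFactorizationMonoid

namespace Polynomial

variable {K : Type} [Field K]

theorem finite_setOf_natDegree_lt [Finite K] (n : ℕ) : {p : K[X] | p.natDegree < n}.Finite := by
  refine Set.Finite.of_finite_image (f := fun p : K[X] => fun i : Fin n => p.coeff i)
    (Set.toFinite _) fun p hp q hq hpq => ?_
  ext i
  rcases lt_or_ge i n with hi | hi
  · exact congrFun hpq ⟨i, hi⟩
  · rw [coeff_eq_zero_of_natDegree_lt (lt_of_lt_of_le hp hi),
      coeff_eq_zero_of_natDegree_lt (lt_of_lt_of_le hq hi)]

theorem monic_multiset_prod {m : Multiset K[X]} (hm : ∀ p ∈ m, p.Monic) : m.prod.Monic := by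
  simpa using monic_multiset_prod_of_monic m id hm

variable [DecidableEq K]

theorem Monic.prod_normalizedFactors {f : K[X]} (hf : f.Monic) :
    (normalizedFactors f).prod = f := by
  simpa [hf.leadingCoeff] using leadingCoeff_mul_prod_normalizedFactors f

theorem monic_and_irreducible_of_mem_normalizedFactors {f p : K[X]}
    (hp : p ∈ normalizedFactors f) : p.Monic ∧ Irreducible p := by
  have hirr := irreducible_of_normalized_factor p hp
  exact ⟨normalize_normalized_factor p hp ▸ monic_normalize hirr.ne_zero, hirr⟩

theorem normalizedFactors_multiset_prod_of_monic {m : Multiset K[X]}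
    (hm : ∀ p ∈ m, p.Monic ∧ Irreducible p) : normalizedFactors m.prod = m := by
  rw [normalizedFactors_prod_eq m fun p hp => (hm p hp).2]
  exact (Multiset.map_congr rfl fun p hp => (hm p hp).1.normalize_eq_self).trans m.map_id

theorem normalizedFactors_prod_of_le {f : K[X]} {m : Multiset K[X]}
    (hm : m ≤ normalizedFactors f) : normalizedFactors m.prod = m :=
  normalizedFactors_multiset_prod_of_monic fun _ hp =>
    monic_and_irreducible_of_mem_normalizedFactors (Multiset.mem_of_le hm hp)

theorem Monic.natDegree_eq_sum_count_mul {f : K[X]} (hf : f.Monic) :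
    f.natDegree = ∑ p ∈ (normalizedFactors f).toFinset,
      (normalizedFactors f).count p * p.natDegree := by
  conv_lhs => rw [← hf.prod_normalizedFactors]
  rw [natDegree_multiset_prod_of_monic _ fun p hp =>
    (monic_and_irreducible_of_mem_normalizedFactors hp).1, Finset.sum_multiset_map_count]
  rfl

end Polynomial

theorem mult_eq_count_normalizedFactors {K : Type} [Field K] [DecidableEq K] {p f : K[X]}
    (hp : p.Monic) (hip : Irreducible p) (hf : f ≠ 0) :
    mult p f = (normalizedFactors f).count p := by
  rw [mult, multiplicity_eq_count_normalizedFactors hip hf, hp.normalize_eq_self]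

theorem tau_eq_prod_count {K : Type} [Field K] [DecidableEq K] {f : K[X]} (hf : f.Monic) :
    tau f = ∏ p ∈ (normalizedFactors f).toFinset, ((normalizedFactors f).count p + 1) := by
  have hdivisors : {d : K[X] | d.Monic ∧ d ∣ f} =
      ((Finset.Iic (normalizedFactors f)).image Multiset.prod : Set K[X]) := by
    ext d
    simp only [Set.mem_ofPred_eq, Finset.coe_image, Finset.coe_Iic, Set.mem_image, Set.mem_Iic]
    constructor
    · rintro ⟨hd, hdf⟩
      exact ⟨normalizedFactors d,
        (dvd_iff_normalizedFactors_le_normalizedFactors hd.ne_zero hf.ne_zero).1 hdf,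
        hd.prod_normalizedFactors⟩
    · rintro ⟨m, hm, rfl⟩
      refine ⟨monic_multiset_prod fun p hp =>
        (monic_and_irreducible_of_mem_normalizedFactors (Multiset.mem_of_le hm hp)).1, ?_⟩
      exact hf.prod_normalizedFactors ▸ Multiset.prod_dvd_prod_of_le hm
  have hinj : Set.InjOn Multiset.prod (Finset.Iic (normalizedFactors f) : Set (Multiset K[X])) :=
    fun m hm m' hm' hmm' => by
      rw [← normalizedFactors_prod_of_le (Finset.mem_Iic.1 hm),
        ← normalizedFactors_prod_of_le (Finset.mem_Iic.1 hm'), hmm']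
  rw [tau, hdivisors, Set.ncard_coe_finset, Finset.card_image_of_injOn hinj, Multiset.card_Iic]

noncomputable def tauFactor (r : ℝ) (e : ℕ) : ℝ := (e + 1) / r ^ e

noncomputable def optimalExponent (r : ℝ) : ℕ := ⌊1 / (r - 1)⌋₊

section TauFactor

variable {r : ℝ}

theorem tauFactor_zero (r : ℝ) : tauFactor r 0 = 1 := by simp [tauFactor]

theorem tauFactor_pos (hr : 0 < r) (e : ℕ) : 0 < tauFactor r e := by
  unfold tauFactor; positivity

theorem tauFactor_le_succ (hr : 1 < r) {e : ℕ} (he : e < optimalExponent r) :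
    tauFactor r e ≤ tauFactor r (e + 1) := by
  have hfloor : ((e + 1 : ℕ) : ℝ) ≤ 1 / (r - 1) :=
    (Nat.le_floor_iff (by have := sub_pos.2 hr; positivity)).1 he
  have hstep : (e + 1) * r ≤ e + 2 := by
    rw [le_div_iff₀ (sub_pos.2 hr)] at hfloor; push_cast at hfloor; linarith
  have hre : 0 < r ^ e := by positivity
  unfold tauFactor
  rw [pow_succ, div_le_div_iff₀ hre (by positivity)]
  push_cast
  nlinarith

theorem tauFactor_succ_lt (hr : 1 < r) {e : ℕ} (he : optimalExponent r ≤ e) :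
    tauFactor r (e + 1) < tauFactor r e := by
  have hfloor : 1 / (r - 1) < e + 1 :=
    (Nat.lt_floor_add_one _).trans_le (by exact_mod_cast Nat.add_le_add_right he 1)
  have hstep : e + 2 < (e + 1) * r := by
    rw [div_lt_iff₀ (sub_pos.2 hr)] at hfloor; linarith
  have hre : 0 < r ^ e := by positivity
  unfold tauFactor
  rw [pow_succ, div_lt_div_iff₀ (by positivity) hre]
  push_cast
  nlinarith

theorem tauFactor_lt_optimalExponent (hr : 1 < r) {e : ℕ} (he : optimalExponent r < e) :
    tauFactor r e < tauFactor r (optimalExponent r) :=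
  Nat.rel_of_forall_rel_succ_of_le_of_lt (· > ·) (fun _ hn => tauFactor_succ_lt hr hn) le_rfl he

theorem tauFactor_le_optimalExponent (hr : 1 < r) (e : ℕ) :
    tauFactor r e ≤ tauFactor r (optimalExponent r) := by
  rcases le_or_gt e (optimalExponent r) with he | he
  · induction he using Nat.decreasingInduction with
    | self => rfl
    | of_succ k hk ih => exact (tauFactor_le_succ hr hk).trans ih
  · exact (tauFactor_lt_optimalExponent hr he).le

end TauFactor

theorem optimalExponent_eq_zero {r : ℝ} (hr : 2 < r) : optimalExponent r = 0 :=
  Nat.floor_eq_zero.2 <| (div_lt_one (by linarith)).2 (by linarith)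

section Weight

variable {K : Type} [Field K]

noncomputable def tauWeight (θ : ℝ) (f : K[X]) : ℝ := tau f / θ ^ f.natDegree

def IsTauSuperior (θ : ℝ) (h : K[X]) : Prop :=
  h.Monic ∧
    (∀ f : K[X], f.Monic → f.natDegree ≤ h.natDegree → tauWeight θ f ≤ tauWeight θ h) ∧
    ∀ f : K[X], f.Monic → h.natDegree < f.natDegree → tauWeight θ f < tauWeight θ h

variable [DecidableEq K] {θ : ℝ} {f g h : K[X]}

def HasOptimalMultiplicities (θ : ℝ) (h : K[X]) : Prop :=
  h.Monic ∧ ∀ p : K[X], p.Monic → Irreducible p →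
    (normalizedFactors h).count p = optimalExponent (θ ^ p.natDegree)

theorem tauWeight_eq_prod (hf : f.Monic) {S : Finset K[X]}
    (hS : (normalizedFactors f).toFinset ⊆ S) :
    tauWeight θ f = ∏ p ∈ S, tauFactor (θ ^ p.natDegree) ((normalizedFactors f).count p) := by
  rw [← Finset.prod_subset hS fun p _ hp => by
    rw [Multiset.count_eq_zero_of_notMem (mt Multiset.mem_toFinset.2 hp), tauFactor_zero]]
  rw [tauWeight, tau_eq_prod_count hf, hf.natDegree_eq_sum_count_mul,
    ← Finset.prod_pow_eq_pow_sum, Nat.cast_prod, ← Finset.prod_div_distrib]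
  refine Finset.prod_congr rfl fun p _ => ?_
  rw [tauFactor, ← pow_mul, mul_comm p.natDegree, Nat.cast_succ]

theorem tauWeight_eq_prod_normalizedFactors_mul (hf : f.Monic) (hg : g.Monic) :
    tauWeight θ f = ∏ p ∈ (normalizedFactors (f * g)).toFinset,
      tauFactor (θ ^ p.natDegree) ((normalizedFactors f).count p) := by
  refine tauWeight_eq_prod hf ?_
  rw [normalizedFactors_mul hf.ne_zero hg.ne_zero, Multiset.toFinset_add]
  exact Finset.subset_union_left

namespace HasOptimalMultiplicities

variable (hθ : 1 < θ) (hh : HasOptimalMultiplicities θ h)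
include hθ hh

theorem tauFactor_le {p : K[X]} (hp : p.Monic) (hip : Irreducible p) (e : ℕ) :
    tauFactor (θ ^ p.natDegree) e ≤ tauFactor (θ ^ p.natDegree) ((normalizedFactors h).count p) :=
  hh.2 p hp hip ▸ tauFactor_le_optimalExponent (one_lt_pow₀ hθ hip.natDegree_pos.ne') e

theorem tauFactor_lt {p : K[X]} (hp : p.Monic) (hip : Irreducible p) {e : ℕ}
    (he : (normalizedFactors h).count p < e) :
    tauFactor (θ ^ p.natDegree) e < tauFactor (θ ^ p.natDegree) ((normalizedFactors h).count p) :=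
  hh.2 p hp hip ▸
    tauFactor_lt_optimalExponent (one_lt_pow₀ hθ hip.natDegree_pos.ne') (hh.2 p hp hip ▸ he)

theorem tauWeight_le (hf : f.Monic) : tauWeight θ f ≤ tauWeight θ h := by
  rw [tauWeight_eq_prod_normalizedFactors_mul hf hh.1,
    tauWeight_eq_prod_normalizedFactors_mul (g := f) hh.1 hf, mul_comm h f]
  refine Finset.prod_le_prod (fun p _ => (tauFactor_pos (by positivity) _).le) fun p hp => ?_
  obtain ⟨hpm, hpi⟩ := monic_and_irreducible_of_mem_normalizedFactors (Multiset.mem_toFinset.1 hp)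
  exact hh.tauFactor_le hθ hpm hpi _

theorem tauWeight_lt_of_not_dvd (hf : f.Monic) (hfh : ¬f ∣ h) :
    tauWeight θ f < tauWeight θ h := by
  rw [dvd_iff_normalizedFactors_le_normalizedFactors hf.ne_zero hh.1.ne_zero,
    Multiset.le_iff_count, not_forall] at hfh
  obtain ⟨p, hp⟩ := hfh
  have hpf : p ∈ normalizedFactors f := Multiset.count_pos.1 (by omega)
  obtain ⟨hpm, hpi⟩ := monic_and_irreducible_of_mem_normalizedFactors hpf
  rw [tauWeight_eq_prod_normalizedFactors_mul hf hh.1,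
    tauWeight_eq_prod_normalizedFactors_mul (g := f) hh.1 hf, mul_comm h f]
  refine Finset.prod_lt_prod (fun p _ => tauFactor_pos (by positivity) _) (fun q hq => ?_)
    ⟨p, ?_, hh.tauFactor_lt hθ hpm hpi (not_le.1 hp)⟩
  · obtain ⟨hqm, hqi⟩ :=
      monic_and_irreducible_of_mem_normalizedFactors (Multiset.mem_toFinset.1 hq)
    exact hh.tauFactor_le hθ hqm hqi _
  · rw [normalizedFactors_mul hf.ne_zero hh.1.ne_zero, Multiset.toFinset_add]
    exact Finset.mem_union_left _ (Multiset.mem_toFinset.2 hpf)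

theorem isTauSuperior : IsTauSuperior θ h :=
  ⟨hh.1, fun _ hf _ => hh.tauWeight_le hθ hf, fun _ hf hdeg => hh.tauWeight_lt_of_not_dvd hθ hf
    fun hfh => (natDegree_le_of_dvd hfh hh.1.ne_zero).not_gt hdeg⟩

theorem eq_of_isTauSuperior (hf : IsTauSuperior θ f) : f = h := by
  have hdeg : h.natDegree ≤ f.natDegree := not_lt.1 fun hlt =>
    (hf.2.2 h hh.1 hlt).not_ge (hh.tauWeight_le hθ hf.1)
  have hfh : f ∣ h := by_contra fun hfh =>
    (hh.tauWeight_lt_of_not_dvd hθ hf.1 hfh).not_ge (hf.2.1 h hh.1 hdeg)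
  exact (eq_of_monic_of_dvd_of_natDegree_le hf.1 hh.1 hfh hdeg).symm

end HasOptimalMultiplicities

theorem exists_hasOptimalMultiplicities [Finite K] (hθ : 1 < θ) :
    ∃ h : K[X], HasOptimalMultiplicities θ h := by
  classical
  obtain ⟨n, hn⟩ := pow_unbounded_of_one_lt 2 hθ
  let a : K[X] → ℕ := fun p =>
    if p.Monic ∧ Irreducible p then optimalExponent (θ ^ p.natDegree) else 0
  have ha : (Function.support a).Finite := (finite_setOf_natDegree_lt n).subset fun p hp => by
    by_contra hdeg
    exact hp <| ite_eq_right_iff.2 fun _ =>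
      optimalExponent_eq_zero (hn.trans_le (pow_le_pow_right₀ hθ.le (not_lt.1 hdeg)))
  let m := (Finsupp.ofSupportFinite a ha).toMultiset
  have hm : ∀ p ∈ m, p.Monic ∧ Irreducible p := fun p hp => by
    rw [Finsupp.mem_toMultiset, Finsupp.mem_support_iff, Finsupp.ofSupportFinite_coe] at hp
    by_contra hpi
    exact hp (if_neg hpi)
  refine ⟨m.prod, monic_multiset_prod fun p hp => (hm p hp).1, fun p hp hip => ?_⟩
  rw [normalizedFactors_multiset_prod_of_monic hm, Finsupp.count_toMultiset,
    Finsupp.ofSupportFinite_coe]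
  exact if_pos ⟨hp, hip⟩

end Weight

theorem rpow_natCast_div_eq_pow {q : ℝ} (hq : 0 ≤ q) (x : ℝ) (n : ℕ) :
    q ^ ((n : ℝ) / x) = (q ^ (1 / x)) ^ n := by
  rw [← one_div_mul_eq_div, Real.rpow_mul_natCast hq]

theorem rpow_neg_natCast_div_eq_inv_pow {q : ℝ} (hq : 0 ≤ q) (x : ℝ) (n : ℕ) :
    q ^ (-(n : ℝ) / x) = ((q ^ (1 / x)) ^ n)⁻¹ := by
  rw [neg_div, Real.rpow_neg hq, rpow_natCast_div_eq_pow hq]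

section FiniteField

variable {Fq : Type} [Field Fq] [Fintype Fq] {x : ℝ}

theorem one_lt_card_rpow_one_div (hx : 0 < x) : 1 < (Fintype.card Fq : ℝ) ^ (1 / x) :=
  Real.one_lt_rpow (by exact_mod_cast Fintype.one_lt_card) (by positivity)

theorem isSHC_iff {h : Fq[X]} : IsSHC x h ↔ IsTauSuperior ((Fintype.card Fq : ℝ) ^ (1 / x)) h := by
  unfold IsSHC IsTauSuperior tauWeight
  simp_rw [rpow_neg_natCast_div_eq_inv_pow (Nat.cast_nonneg _), ← div_eq_mul_inv]

theorem HasOptimalMultiplicities.isHhat [DecidableEq Fq] {h : Fq[X]}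
    (hh : HasOptimalMultiplicities ((Fintype.card Fq : ℝ) ^ (1 / x)) h) : IsHhat x h := by
  refine ⟨hh.1, fun p hp hip => ?_⟩
  rw [mult_eq_count_normalizedFactors hp hip hh.1.ne_zero, hh.2 p hp hip, optimalExponent,
    rpow_natCast_div_eq_pow (Nat.cast_nonneg _)]

end FiniteField

/-- For every `x > 0` there is one and only one `x`-superior highly composite polynomial,
namely `ĥ(x)`. -/
theorem shc_exists_unique {Fq : Type} [Field Fq] [Fintype Fq] (x : ℝ) (hx : 0 < x) :
    (∃! h : Fq[X], IsSHC x h) ∧ (∀ h : Fq[X], IsSHC x h → IsHhat x h) := by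
  classical
  have hθ := one_lt_card_rpow_one_div (Fq := Fq) hx
  obtain ⟨h, hh⟩ := exists_hasOptimalMultiplicities (K := Fq) hθ
  have huniq : ∀ f : Fq[X], IsSHC x f → f = h := fun f hf =>
    hh.eq_of_isTauSuperior hθ (isSHC_iff.1 hf)
  exact ⟨⟨h, isSHC_iff.2 (hh.isTauSuperior hθ), huniq⟩, fun f hf => huniq f hf ▸ hh.isHhat⟩
end

section
/- Let x > 0 and let u be a positive integer such that a_u = ⌊1/(q^{u/x} − 1)⌋ ≥ 1. Then log(1 + 1/a_u) − (u·log q)/x ≤ log(1 + 1/(a_u(a_u + 2))) ≤ log(4/3). -/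
/-- For `a_u = ⌊1/(q^{u/x} - 1)⌋ ≥ 1`, one has
`log(1 + 1/a_u) - u log q / x ≤ log(1 + 1/(a_u (a_u + 2))) ≤ log(4/3)`. -/
theorem epsilon_range_bound (q : ℕ) (hq : 2 ≤ q) (x : ℝ) (hx : 0 < x)
    (u : ℕ) (hu : 0 < u) (a : ℕ)
    (ha : a = ⌊1 / ((q : ℝ) ^ ((u : ℝ) / x) - 1)⌋₊) (ha₁ : 1 ≤ a) :
    Real.log (1 + 1 / (a : ℝ)) - (u : ℝ) * Real.log q / x ≤
        Real.log (1 + 1 / ((a : ℝ) * ((a : ℝ) + 2))) ∧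
      Real.log (1 + 1 / ((a : ℝ) * ((a : ℝ) + 2))) ≤ Real.log (4 / 3) := by
  have hA : (1:ℝ) ≤ (a:ℝ) := by exact_mod_cast ha₁
  have hA0 : (0:ℝ) < (a:ℝ) := by linarith
  set t : ℝ := (q:ℝ) ^ ((u:ℝ)/x) with hts
  have hq1 : (1:ℝ) < q := by exact_mod_cast lt_of_lt_of_le one_lt_two hq
  have hux : 0 < (u:ℝ)/x := div_pos (by exact_mod_cast hu) hx
  have ht1 : 1 < t :=
    Real.one_lt_rpow_iff_of_pos (by linarith) |>.mpr (Or.inl ⟨hq1, hux⟩)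
  have ht0 : 0 < t - 1 := by linarith
  have hfl : (a:ℝ) ≤ 1 / (t - 1) := by
    rw [ha]; exact Nat.floor_le (by positivity)
  have hlt : 1 / (t - 1) < (a:ℝ) + 1 := by
    rw [ha]; exact Nat.lt_floor_add_one _
  have h1 : 1 < ((a:ℝ) + 1) * (t - 1) := by
    rw [div_lt_iff₀ ht0] at hlt; linarith
  have haa2 : (0:ℝ) < (a:ℝ) * ((a:ℝ) + 2) := by nlinarith
  constructor
  · have hlogt : (u:ℝ) * Real.log q / x = Real.log t := by
      rw [hts, Real.log_rpow (by linarith : (0:ℝ) < q)]; ring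
    rw [hlogt, ← Real.log_div (by positivity) (by positivity)]
    apply Real.log_le_log (by positivity)
    rw [div_le_iff₀ (by linarith : (0:ℝ) < t)]
    have key : ((a:ℝ)+1)*((a:ℝ)+2) ≤ ((a:ℝ)+1)^2 * t := by nlinarith
    have h2 : (1:ℝ) + 1/(a:ℝ) = ((a:ℝ)+1)/(a:ℝ) := by field_simp
    have h3 : (1:ℝ) + 1/((a:ℝ)*((a:ℝ)+2)) = (((a:ℝ)+1)^2)/((a:ℝ)*((a:ℝ)+2)) := by
      field_simp; ring
    rw [h2, h3, div_mul_eq_mul_div, div_le_div_iff₀ hA0 haa2]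
    nlinarith [key]
  · apply Real.log_le_log (by positivity)
    have h3 : (3:ℝ) ≤ (a:ℝ) * ((a:ℝ) + 2) := by nlinarith
    have : 1 / ((a:ℝ) * ((a:ℝ) + 2)) ≤ 1/3 :=
      one_div_le_one_div_of_le (by norm_num) h3
    linarith
end

section
/- Fix an enumeration P_1, P_2, … of the monic irreducible polynomials of 𝔽_q[t] such that deg P_i ≤ deg P_j whenever i ≤ j, and for k ≥ 1 let M^(k) denote the set of monic polynomials all of whose irreducible factors lie in {P_1, …, P_k}. Suppose f = P_1^{a_1}···P_k^{a_k} satisfies τ(f) ≥ τ(g) for all g ∈ M^(k) with deg g ≤ deg f, and k ≥ 2. Then the polynomial f' = P_1^{a_1}···P_{k-1}^{a_{k-1}} satisfies τ(f') ≥ τ(g') for all g' ∈ M^(k−1) with deg g' ≤ deg f' = deg f − a_k·deg P_k. -/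
open Polynomial

lemma finite_monic_divisors {Fq : Type} [Field Fq] [Fintype Fq] {f : Fq[X]} (hf : f ≠ 0) :
    {d : Fq[X] | d.Monic ∧ d ∣ f}.Finite := by
  apply Set.Finite.of_finite_image
    (f := fun p : Fq[X] => fun i : Fin (f.natDegree + 1) => p.coeff i)
  · exact Set.Finite.subset Set.finite_univ (Set.subset_univ _)
  · intro p hp q hq hpq
    have hpd : p.natDegree ≤ f.natDegree := natDegree_le_of_dvd hp.2 hf
    have hqd : q.natDegree ≤ f.natDegree := natDegree_le_of_dvd hq.2 hf
    ext n
    rcases le_or_gt n f.natDegree with h | h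
    · exact congrFun hpq ⟨n, Nat.lt_succ_of_le h⟩
    · rw [coeff_eq_zero_of_natDegree_lt (lt_of_le_of_lt hpd h),
        coeff_eq_zero_of_natDegree_lt (lt_of_le_of_lt hqd h)]

lemma tau_mul {Fq : Type} [Field Fq] {m n : Fq[X]} (h : IsCoprime m n) :
    tau (m * n) = tau m * tau n := by
  have hS : {d : Fq[X] | d.Monic ∧ d ∣ m * n} =
      (fun p : Fq[X] × Fq[X] => p.1 * p.2) ''
        ({d : Fq[X] | d.Monic ∧ d ∣ m} ×ˢ {d : Fq[X] | d.Monic ∧ d ∣ n}) := by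
    apply Set.Subset.antisymm
    · rintro d ⟨hd, hdvd⟩
      obtain ⟨d₁, d₂, hd₁, hd₂, rfl⟩ := exists_dvd_and_dvd_of_dvd_mul hdvd
      have hd₁0 : d₁ ≠ 0 := fun h0 => hd.ne_zero (by simp [h0])
      have hc : d₁.leadingCoeff ≠ 0 := leadingCoeff_ne_zero.2 hd₁0
      have hu1 : C d₁.leadingCoeff⁻¹ * d₁ ∣ d₁ :=
        ⟨C d₁.leadingCoeff, by
          rw [mul_comm (C d₁.leadingCoeff⁻¹) d₁, mul_assoc, ← C_mul,
            inv_mul_cancel₀ hc, C_1, mul_one]⟩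
      have hu2 : C d₁.leadingCoeff * d₂ ∣ d₂ :=
        ⟨C d₁.leadingCoeff⁻¹, by
          rw [mul_comm (C d₁.leadingCoeff) d₂, mul_assoc, ← C_mul,
            mul_inv_cancel₀ hc, C_1, mul_one]⟩
      have hkey : (C d₁.leadingCoeff⁻¹ * d₁) * (C d₁.leadingCoeff * d₂) = d₁ * d₂ := by
        rw [mul_mul_mul_comm, ← C_mul, inv_mul_cancel₀ hc, C_1, one_mul]
      have h1 : (C d₁.leadingCoeff⁻¹ * d₁).Monic := by
        rw [mul_comm]; exact monic_mul_leadingCoeff_inv hd₁0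
      have h2 : (C d₁.leadingCoeff * d₂).Monic := by
        have hmul : ((C d₁.leadingCoeff⁻¹ * d₁) * (C d₁.leadingCoeff * d₂)).Monic := by
          rw [hkey]; exact hd
        exact Monic.of_mul_monic_left h1 hmul
      exact ⟨(C d₁.leadingCoeff⁻¹ * d₁, C d₁.leadingCoeff * d₂),
        ⟨⟨h1, hu1.trans hd₁⟩, ⟨h2, hu2.trans hd₂⟩⟩, hkey⟩
    · rintro d ⟨⟨d₁, d₂⟩, ⟨⟨h₁, h₁d⟩, h₂, h₂d⟩, rfl⟩
      exact ⟨h₁.mul h₂, mul_dvd_mul h₁d h₂d⟩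
  have hinj : Set.InjOn (fun p : Fq[X] × Fq[X] => p.1 * p.2)
      ({d : Fq[X] | d.Monic ∧ d ∣ m} ×ˢ {d : Fq[X] | d.Monic ∧ d ∣ n}) := by
    have key : ∀ (x₁ x₂ y₁ y₂ : Fq[X]), x₁ ∣ m → y₂ ∣ n → x₁ * x₂ = y₁ * y₂ →
        x₁ ∣ y₁ := by
      intro x₁ x₂ y₁ y₂ hx₁ hy₂ hxy
      have hcop : IsCoprime x₁ y₂ :=
        (h.of_isCoprime_of_dvd_left hx₁).of_isCoprime_of_dvd_right hy₂
      exact hcop.dvd_of_dvd_mul_right (hxy ▸ Dvd.intro _ rfl)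
    rintro ⟨d₁, d₂⟩ ⟨⟨hd₁, hd₁d⟩, hd₂, hd₂d⟩ ⟨e₁, e₂⟩ ⟨⟨he₁, he₁d⟩, he₂, he₂d⟩ heq
    simp only at heq
    have h1 : d₁ = e₁ :=
      eq_of_monic_of_associated hd₁ he₁
        (associated_of_dvd_dvd (key d₁ d₂ e₁ e₂ hd₁d he₂d heq)
          (key e₁ e₂ d₁ d₂ he₁d hd₂d heq.symm))
    subst h1
    have h2 : d₂ = e₂ := mul_left_cancel₀ hd₁.ne_zero heq
    rw [h2]
  rw [tau, hS, Set.ncard_image_of_injOn hinj, ← Nat.card_coe_set_eq,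
    Nat.card_congr (Equiv.Set.prod _ _), Nat.card_prod, tau, tau,
    Nat.card_coe_set_eq, Nat.card_coe_set_eq]

/-- If `f = P_0^{a_0} ⋯ P_{k-1}^{a_{k-1}}` is `k`-highly composite (maximizes `tau` among
monic polynomials of degree at most `deg f` whose irreducible factors lie in
`{P_0, …, P_{k-1}}`), then `P_0^{a_0} ⋯ P_{k-2}^{a_{k-2}}` is `(k-1)`-highly composite. -/
theorem truncation_highly_composite {Fq : Type} [Field Fq] [Fintype Fq]
    (P : ℕ → Fq[X])
    (hP : ∀ i, (P i).Monic ∧ Irreducible (P i))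
    (hinj : Function.Injective P)
    (hsurj : ∀ p : Fq[X], p.Monic → Irreducible p → ∃ i, P i = p)
    (hmono : ∀ i j, i ≤ j → (P i).natDegree ≤ (P j).natDegree)
    (k : ℕ) (hk : 2 ≤ k) (a : ℕ → ℕ)
    (hf : ∀ g : Fq[X], g.Monic →
      (∀ p : Fq[X], p.Monic → Irreducible p → p ∣ g → ∃ i < k, P i = p) →
      g.natDegree ≤ (∏ i ∈ Finset.range k, P i ^ a i).natDegree →
      tau g ≤ tau (∏ i ∈ Finset.range k, P i ^ a i)) :
    ∀ g : Fq[X], g.Monic →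
      (∀ p : Fq[X], p.Monic → Irreducible p → p ∣ g → ∃ i < k - 1, P i = p) →
      g.natDegree ≤ (∏ i ∈ Finset.range (k - 1), P i ^ a i).natDegree →
      tau g ≤ tau (∏ i ∈ Finset.range (k - 1), P i ^ a i) := by
  intro g hg hgfac hgdeg
  set p := P (k - 1) with hp
  set N := a (k - 1) with hN
  set f' := ∏ i ∈ Finset.range (k - 1), P i ^ a i with hf'
  have hk1 : k - 1 + 1 = k := by omega
  have hsplit : (∏ i ∈ Finset.range k, P i ^ a i) = f' * p ^ N := by
    rw [← hk1, Finset.prod_range_succ]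
  have hf'monic : f'.Monic := monic_prod_of_monic _ _ fun i _ => (hP i).1.pow _
  have hppow : (p ^ N).Monic := (hP (k - 1)).1.pow _
  have hpg : ¬ p ∣ g := by
    intro hdvd
    obtain ⟨i, hi, hPi⟩ := hgfac p (hP (k - 1)).1 (hP (k - 1)).2 hdvd
    have := hinj hPi
    omega
  have hpf' : ¬ p ∣ f' := by
    intro hdvd
    have hprime : Prime p := (hP (k - 1)).2.prime
    obtain ⟨i, hi, hdvd'⟩ := hprime.exists_mem_finset_dvd hdvd
    have hdvdP : p ∣ P i := hprime.dvd_of_dvd_pow hdvd'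
    have heq : p = P i := eq_of_monic_of_associated (hP (k - 1)).1 (hP i).1
      ((hP (k - 1)).2.associated_of_dvd (hP i).2 hdvdP)
    have := hinj heq.symm
    simp only [Finset.mem_range] at hi
    omega
  have hcopg : IsCoprime g (p ^ N) :=
    (((hP (k - 1)).2.coprime_iff_not_dvd.2 hpg).symm).pow_right
  have hcopf : IsCoprime f' (p ^ N) :=
    (((hP (k - 1)).2.coprime_iff_not_dvd.2 hpf').symm).pow_right
  have hdeg : (g * p ^ N).natDegree ≤ (∏ i ∈ Finset.range k, P i ^ a i).natDegree := by
    rw [hsplit, hg.natDegree_mul hppow, hf'monic.natDegree_mul hppow]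
    exact Nat.add_le_add_right hgdeg _
  have hfac : ∀ q : Fq[X], q.Monic → Irreducible q → q ∣ g * p ^ N → ∃ i < k, P i = q := by
    intro q hq hqirr hqdvd
    rcases hqirr.prime.dvd_mul.1 hqdvd with hdvd | hdvd
    · obtain ⟨i, hi, hPi⟩ := hgfac q hq hqirr hdvd
      exact ⟨i, by omega, hPi⟩
    · have hqp : q ∣ p := hqirr.prime.dvd_of_dvd_pow hdvd
      have heq : q = p := eq_of_monic_of_associated hq (hP (k - 1)).1
        (hqirr.associated_of_dvd (hP (k - 1)).2 hqp)
      exact ⟨k - 1, by omega, heq.symm⟩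
  have hle := hf (g * p ^ N) (hg.mul hppow) hfac hdeg
  rw [hsplit, tau_mul hcopf, tau_mul hcopg] at hle
  have hTpos : 0 < tau (p ^ N) := by
    rw [tau, Set.ncard_pos (finite_monic_divisors hppow.ne_zero)]
    exact ⟨1, monic_one, one_dvd _⟩
  exact Nat.le_of_mul_le_mul_right hle hTpos
end
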